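/- For the cycle monomials f_m := y_{12}y_{23}···y_{m-1,m}y_{m,1} and the points p_m (the characteristic function of the m-cycle {(1,2),...,(m-1,m),(m,1)} viewed as a 0/1 off-diagonal matrix): f_i(g·p_j) = 0 for all i ≠ j and all g ∈ Sym(ℕ), while f_i(p_i) = 1. -/

import Mathlib

open MvPolynomial

/-- Index set of off-diagonal matrix entries. -/
def OffDiag : Type := {q : ℕ × ℕ // q.1 ≠ q.2}

variable (K : Type*) [Field K]

/-- The `m`-cycle monomial `f_m = y_{12} y_{23} ⋯ y_{m-1,m} y_{m,1}` (for `m ≥ 2`). -/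
noncomputable def cycleMon (m : ℕ) (hm : 2 ≤ m) : MvPolynomial OffDiag K :=
  ∏ i ∈ (Finset.Icc 1 m).attach,
    X (⟨(i.1, if i.1 = m then 1 else i.1 + 1), by
      have := Finset.mem_Icc.mp i.2
      dsimp only
      split_ifs <;> omega⟩ : OffDiag)

/-- `Sym(ℕ)` acting on off-diagonal matrices (points) by simultaneous row and
column permutation. -/
def actP (σ : Equiv.Perm ℕ) (p : OffDiag → K) : OffDiag → K :=
  fun q => p ⟨(σ q.1.1, σ q.1.2), fun h => q.2 (σ.injective h)⟩

/-- The point `p_m`: the characteristic function of the directed `m`-cycle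
`(1,2), (2,3), …, (m-1,m), (m,1)` viewed as a 0/1 off-diagonal matrix. -/
def cyclePoint (m : ℕ) : OffDiag → K :=
  fun q => if q.1.1 ∈ Finset.Icc 1 m ∧ q.1.2 = (if q.1.1 = m then 1 else q.1.1 + 1)
    then 1 else 0

/-!
If `f_i(σ·p_j) ≠ 0`, then `σ` sends every edge `(k, k + 1)` of the `i`-cycle to an edge of the
`j`-cycle, i.e. on `{1, …, i}` it intertwines the successor maps of the two cycles. Hence `σ`
carries the orbit of `1` in the `i`-cycle onto the orbit of `σ 1` in the `j`-cycle. The first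
orbit returns to its start exactly after multiples of `i` steps, the second exactly after
multiples of `j` steps, and since `σ` is injective these return times agree: `i ∣ j` and `j ∣ i`.
-/

open Finset

def cycleSucc (m k : ℕ) : ℕ := if k = m then 1 else k + 1

lemma self_ne_cycleSucc {m : ℕ} (hm : 2 ≤ m) (k : ℕ) : k ≠ cycleSucc m k := by
  unfold cycleSucc
  split_ifs <;> omega

lemma cycleSucc_mem_Icc {m k : ℕ} (hk : k ∈ Icc 1 m) : cycleSucc m k ∈ Icc 1 m := by
  rw [mem_Icc] at hk ⊢
  unfold cycleSucc
  split_ifs <;> omega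

lemma cycleSucc_mod_add_one (m t : ℕ) : cycleSucc m (t % m + 1) = (t + 1) % m + 1 := by
  rw [← Nat.mod_add_mod t m 1, cycleSucc]
  split_ifs with h
  · rw [h, Nat.mod_self]
  · rcases m.eq_zero_or_pos with rfl | hm
    · simp
    · rw [Nat.mod_eq_of_lt (a := t % m + 1) (by have := t.mod_lt hm; omega)]

lemma iterate_cycleSucc_mod_add_one (m s t : ℕ) :
    (cycleSucc m)^[t] (s % m + 1) = (s + t) % m + 1 := by
  induction t with
  | zero => rfl
  | succ t ih => rw [Function.iterate_succ_apply', ih, cycleSucc_mod_add_one, Nat.add_assoc]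

lemma iterate_cycleSucc_eq_self_iff {m k t : ℕ} (hk : k ∈ Icc 1 m) :
    (cycleSucc m)^[t] k = k ↔ m ∣ t := by
  rw [mem_Icc] at hk
  obtain ⟨s, rfl⟩ : ∃ s, k = s % m + 1 := ⟨k - 1, by rw [Nat.mod_eq_of_lt (by omega)]; omega⟩
  rw [iterate_cycleSucc_mod_add_one, Nat.add_right_cancel_iff]
  exact Nat.add_modEq_left_iff

lemma Set.MapsTo.apply_iterate_eq_iterate_apply {α β : Type*} {f : α → α} {g : β → β} {σ : α → β} {s : Set α}
    (hf : Set.MapsTo f s s) (h : ∀ x ∈ s, σ (f x) = g (σ x)) {x : α} (hx : x ∈ s) (n : ℕ) :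
    σ (f^[n] x) = g^[n] (σ x) := by
  induction n with
  | zero => rfl
  | succ n ih =>
    rw [Function.iterate_succ_apply', Function.iterate_succ_apply', h _ (hf.iterate n hx), ih]

theorem eq_of_semiconj_cycleSucc {i j : ℕ} {σ : ℕ → ℕ} (hσ : Function.Injective σ) (hi : 0 < i)
    (h : ∀ k ∈ Icc 1 i, σ k ∈ Icc 1 j ∧ σ (cycleSucc i k) = cycleSucc j (σ k)) :
    i = j := by
  have one_mem : 1 ∈ Icc 1 i := mem_Icc.2 ⟨le_rfl, hi⟩
  have maps : Set.MapsTo (cycleSucc i) ↑(Icc 1 i) ↑(Icc 1 i) := fun _ hk => cycleSucc_mem_Icc hk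
  have orbit := maps.apply_iterate_eq_iterate_apply (fun k hk => (h k hk).2) one_mem
  have hσ1 := (h 1 one_mem).1
  apply Nat.dvd_antisymm
  · refine (iterate_cycleSucc_eq_self_iff one_mem).1 (hσ ?_)
    rw [orbit, (iterate_cycleSucc_eq_self_iff hσ1).2 dvd_rfl]
  · rw [← iterate_cycleSucc_eq_self_iff hσ1, ← orbit,
      (iterate_cycleSucc_eq_self_iff one_mem).2 dvd_rfl]

lemma eval_cycleMon (p : OffDiag → K) (m : ℕ) (hm : 2 ≤ m) :
    eval p (cycleMon K m hm) =
      ∏ k ∈ (Icc 1 m).attach, p ⟨(k, cycleSucc m k), self_ne_cycleSucc hm k⟩ := by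
  rw [cycleMon, map_prod]
  exact Finset.prod_congr rfl fun _ _ => eval_X _

lemma cyclePoint_ne_zero_iff {m : ℕ} {q : OffDiag} :
    cyclePoint K m q ≠ 0 ↔ q.1.1 ∈ Icc 1 m ∧ q.1.2 = cycleSucc m q.1.1 := by
  simp [cyclePoint, cycleSucc, and_assoc]

lemma eval_cycleMon_cyclePoint_self {m : ℕ} (hm : 2 ≤ m) :
    eval (cyclePoint K m) (cycleMon K m hm) = 1 := by
  rw [eval_cycleMon]
  exact Finset.prod_eq_one fun k _ => if_pos ⟨k.2, rfl⟩

lemma semiconj_of_eval_cycleMon_actP_ne_zero {i j : ℕ} (hi : 2 ≤ i) {σ : Equiv.Perm ℕ}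
    (h : eval (actP K σ (cyclePoint K j)) (cycleMon K i hi) ≠ 0) :
    ∀ k ∈ Icc 1 i, σ k ∈ Icc 1 j ∧ σ (cycleSucc i k) = cycleSucc j (σ k) := by
  intro k hk
  rw [eval_cycleMon, Finset.prod_ne_zero_iff] at h
  exact (cyclePoint_ne_zero_iff K).1 (h ⟨k, hk⟩ (Finset.mem_attach _ _))

/-- `f_i(g • p_j) = 0` for all `i ≠ j` and all `g ∈ Sym(ℕ)`,
while `f_i(p_i) = 1`. -/
theorem cycleMon_eval_cyclePoint :
    (∀ i j (hi : 2 ≤ i) (_hj : 2 ≤ j), i ≠ j → ∀ σ : Equiv.Perm ℕ,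
      eval (actP K σ (cyclePoint K j)) (cycleMon K i hi) = 0) ∧
    (∀ i (hi : 2 ≤ i), eval (cyclePoint K i) (cycleMon K i hi) = 1) := by
  refine ⟨fun i j hi _ hne σ => ?_, fun i hi => eval_cycleMon_cyclePoint_self K hi⟩
  by_contra h
  exact hne (eq_of_semiconj_cycleSucc σ.injective (by omega)
    (semiconj_of_eval_cycleMon_actP_ne_zero K hi h))
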